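/- Let Ω ⊂ ℝ^d be a nonempty compact convex set and let f : Ω → ℝ be continuous. For every s, s' ≥ 0 and every x ∈ Ω, the scaled Bellman operators satisfy the semigroup identity (T_{s'}(T_s f))(x) = (T_{s+s'} f)(x). -/
import Mathlib


open MeasureTheory

/-- The `s`-scaled Bellman operator on a set `Ω`:
`(T_s f)(x) = min_{y ∈ Ω} { ‖x−y‖²/(2s) + f(y) }` for `s > 0`, and `T_0 f = f`. -/
noncomputable def bellman {d : ℕ} (Ω : Set (EuclideanSpace ℝ (Fin d))) (s : ℝ)
    (f : EuclideanSpace ℝ (Fin d) → ℝ) (x : EuclideanSpace ℝ (Fin d)) : ℝ :=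
  if s = 0 then f x else sInf ((fun y => ‖x - y‖ ^ 2 / (2 * s) + f y) '' Ω)

/-- the semigroup identity `T_{s'} (T_s f) = T_{s+s'} f` on a nonempty compact
convex set `Ω`, for every `s, s' ≥ 0` and continuous `f : Ω → ℝ`. -/
theorem stmt15 {d : ℕ} (Ω : Set (EuclideanSpace ℝ (Fin d)))
    (hne : Ω.Nonempty) (hcomp : IsCompact Ω) (hconv : Convex ℝ Ω)
    (f : EuclideanSpace ℝ (Fin d) → ℝ) (hf : ContinuousOn f Ω)
    (s s' : ℝ) (hs : 0 ≤ s) (hs' : 0 ≤ s') :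
    ∀ x ∈ Ω, bellman Ω s' (bellman Ω s f) x = bellman Ω (s + s') f x := by
  have unfold0 : ∀ (g : EuclideanSpace ℝ (Fin d) → ℝ) (x : EuclideanSpace ℝ (Fin d)),
      bellman Ω 0 g x = g x := fun g x => if_pos rfl
  intro x hx
  rcases eq_or_lt_of_le hs with hs0 | hs0
  · have hb0 : bellman Ω 0 f = f := funext fun z => unfold0 f z
    rw [← hs0, hb0, zero_add]
  rcases eq_or_lt_of_le hs' with hs'0 | hs'0
  · rw [← hs'0, unfold0, add_zero]
  -- main case : 0 < s, 0 < s'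
  have hss : (0:ℝ) < s + s' := by linarith
  obtain ⟨y₀, hy₀, hmin⟩ := hcomp.exists_isMinOn hne hf
  have hm : ∀ y ∈ Ω, f y₀ ≤ f y := fun y hy => hmin hy
  set m := f y₀ with hm_def
  have hinner_ne : ∀ z : EuclideanSpace ℝ (Fin d),
      ((fun y => ‖z - y‖ ^ 2 / (2 * s) + f y) '' Ω).Nonempty := fun z => hne.image _
  have hinner_bdd : ∀ z : EuclideanSpace ℝ (Fin d),
      BddBelow ((fun y => ‖z - y‖ ^ 2 / (2 * s) + f y) '' Ω) := by
    intro z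
    refine ⟨m, ?_⟩
    rintro _ ⟨y, hy, rfl⟩
    have h1 : 0 ≤ ‖z - y‖ ^ 2 / (2 * s) := by positivity
    have := hm y hy
    simp only
    linarith
  have hbell : ∀ z : EuclideanSpace ℝ (Fin d),
      bellman Ω s f z = sInf ((fun y => ‖z - y‖ ^ 2 / (2 * s) + f y) '' Ω) :=
    fun z => if_neg hs0.ne'
  have hbell_lb : ∀ z : EuclideanSpace ℝ (Fin d), m ≤ bellman Ω s f z := by
    intro z
    rw [hbell z]
    refine le_csInf (hinner_ne z) ?_
    rintro _ ⟨y, hy, rfl⟩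
    have h1 : 0 ≤ ‖z - y‖ ^ 2 / (2 * s) := by positivity
    have := hm y hy
    simp only
    linarith
  have houter_bdd :
      BddBelow ((fun z => ‖x - z‖ ^ 2 / (2 * s') + bellman Ω s f z) '' Ω) := by
    refine ⟨m, ?_⟩
    rintro _ ⟨z, hz, rfl⟩
    have h1 : 0 ≤ ‖x - z‖ ^ 2 / (2 * s') := by positivity
    have := hbell_lb z
    simp only
    linarith
  have hA_bdd :
      BddBelow ((fun y => ‖x - y‖ ^ 2 / (2 * (s + s')) + f y) '' Ω) := by
    refine ⟨m, ?_⟩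
    rintro _ ⟨y, hy, rfl⟩
    have h1 : 0 ≤ ‖x - y‖ ^ 2 / (2 * (s + s')) := by positivity
    have := hm y hy
    simp only
    linarith
  rw [bellman, if_neg hs'0.ne', bellman, if_neg hss.ne']
  apply le_antisymm
  · -- LHS ≤ RHS
    refine le_csInf (hne.image _) ?_
    rintro _ ⟨y, hy, rfl⟩
    set a := s / (s + s') with ha_def
    set b := s' / (s + s') with hb_def
    have hab : a + b = 1 := by rw [ha_def, hb_def]; field_simp
    have ha0 : 0 ≤ a := by rw [ha_def]; positivity
    have hb0 : 0 ≤ b := by rw [hb_def]; positivity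
    have hz : a • x + b • y ∈ Ω := hconv hx hy ha0 hb0 hab
    have ha1 : a = 1 - b := by linarith
    have e1 : x - (a • x + b • y) = b • (x - y) := by rw [ha1]; module
    have e2 : (a • x + b • y) - y = a • (x - y) := by
      have hb1 : b = 1 - a := by linarith
      rw [hb1]; module
    have n1 : ‖x - (a • x + b • y)‖ ^ 2 = b ^ 2 * ‖x - y‖ ^ 2 := by
      rw [e1, norm_smul, Real.norm_eq_abs, mul_pow, sq_abs]
    have n2 : ‖(a • x + b • y) - y‖ ^ 2 = a ^ 2 * ‖x - y‖ ^ 2 := by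
      rw [e2, norm_smul, Real.norm_eq_abs, mul_pow, sq_abs]
    calc sInf ((fun z => ‖x - z‖ ^ 2 / (2 * s') + bellman Ω s f z) '' Ω)
        ≤ ‖x - (a • x + b • y)‖ ^ 2 / (2 * s') + bellman Ω s f (a • x + b • y) :=
          csInf_le houter_bdd ⟨_, hz, rfl⟩
      _ ≤ ‖x - (a • x + b • y)‖ ^ 2 / (2 * s') +
            (‖(a • x + b • y) - y‖ ^ 2 / (2 * s) + f y) := by
          have : bellman Ω s f (a • x + b • y) ≤
              ‖(a • x + b • y) - y‖ ^ 2 / (2 * s) + f y := by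
            rw [hbell]
            exact csInf_le (hinner_bdd _) ⟨y, hy, rfl⟩
          linarith
      _ = ‖x - y‖ ^ 2 / (2 * (s + s')) + f y := by
          rw [n1, n2, ha_def, hb_def]
          field_simp
          ring
  · -- RHS ≤ LHS
    refine le_csInf (hne.image _) ?_
    rintro _ ⟨z, hz, rfl⟩
    simp only
    rw [hbell z]
    have key : sInf ((fun y => ‖x - y‖ ^ 2 / (2 * (s + s')) + f y) '' Ω)
        - ‖x - z‖ ^ 2 / (2 * s')
        ≤ sInf ((fun y => ‖z - y‖ ^ 2 / (2 * s) + f y) '' Ω) := by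
      refine le_csInf (hinner_ne z) ?_
      rintro _ ⟨y, hy, rfl⟩
      have h1 : sInf ((fun y => ‖x - y‖ ^ 2 / (2 * (s + s')) + f y) '' Ω)
          ≤ ‖x - y‖ ^ 2 / (2 * (s + s')) + f y := csInf_le hA_bdd ⟨y, hy, rfl⟩
      have htri : ‖x - y‖ ≤ ‖x - z‖ + ‖z - y‖ := by
        have := dist_triangle x z y
        simpa [dist_eq_norm] using this
      have hsq : ‖x - y‖ ^ 2 ≤ (‖x - z‖ + ‖z - y‖) ^ 2 :=
        pow_le_pow_left₀ (norm_nonneg _) htri 2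
      have hkey : ‖x - y‖ ^ 2 / (2 * (s + s'))
          ≤ ‖x - z‖ ^ 2 / (2 * s') + ‖z - y‖ ^ 2 / (2 * s) := by
        rw [div_add_div _ _ (by positivity : (2:ℝ) * s' ≠ 0)
          (by positivity : (2:ℝ) * s ≠ 0),
          div_le_div_iff₀ (by positivity) (by positivity)]
        nlinarith [sq_nonneg (‖x - z‖ * s - ‖z - y‖ * s'), norm_nonneg (x - z),
          norm_nonneg (z - y), mul_pos hs0 hs'0]
      simp only
      linarith
    linarith
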